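/- arXiv:2407.04035 — 2 statements merged into one kernel-verified Lean document; each statement's English description precedes it below -/
import Mathlib

section
/- The number of spanning trees τ of a connected graph G|_R satisfying m(τ) = τ is independent of the choice of partition scheme m on G|_R: for any two partition schemes m and m', |{τ : m(τ) = τ}| = |{τ : m'(τ) = τ}|, and both equal (-1)^{|R|-1} Σ_{g connected spanning subgraph of G|_R} (-1)^{|E_g|}. -/
attribute [-instance] Sym2.instPartialOrder


open scoped Classical

namespace BC

variable {V : Type*}

/-- The set of vertices incident to at least one edge of `τ`. -/
noncomputable def supp [Fintype V] (τ : Finset (Sym2 V)) : Finset V :=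
  Finset.univ.filter (fun v => ∃ e ∈ τ, v ∈ e)

/-- The graph on vertex set `R` with edge set `F` is connected. -/
def ConnOn (R : Finset V) (F : Finset (Sym2 V)) : Prop :=
  (SimpleGraph.induce (R : Set V) (SimpleGraph.fromEdgeSet (F : Set (Sym2 V)))).Connected

/-- Edges of `G` with both endpoints in `R` (edge set of the induced subgraph `G|_R`). -/
noncomputable def edgesIn [Fintype V] [DecidableEq V] (G : SimpleGraph V) [DecidableRel G.Adj]
    (R : Finset V) : Finset (Sym2 V) :=
  G.edgeFinset.filter (fun e => ∀ v ∈ e, v ∈ R)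

/-- `g` is (the edge set of) a connected spanning subgraph of `G|_R`. -/
def IsCSS [Fintype V] [DecidableEq V] (G : SimpleGraph V) [DecidableRel G.Adj]
    (R : Finset V) (g : Finset (Sym2 V)) : Prop :=
  g ⊆ edgesIn G R ∧ ConnOn R g

/-- `τ` is (the edge set of) a spanning tree of `G|_R`. -/
def IsSpanningTree [Fintype V] [DecidableEq V] (G : SimpleGraph V) [DecidableRel G.Adj]
    (R : Finset V) (τ : Finset (Sym2 V)) : Prop :=
  IsCSS G R τ ∧ τ.card = R.card - 1

/-- A forest: an edge set containing no cycle. -/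
def IsForest (F : Finset (Sym2 V)) : Prop :=
  (SimpleGraph.fromEdgeSet (F : Set (Sym2 V))).IsAcyclic

/-- `τ` is the edge set of a nontrivial tree component of the forest `F`. -/
def IsTreeComponent [Fintype V] (F τ : Finset (Sym2 V)) : Prop :=
  τ ⊆ F ∧ τ.Nonempty ∧ ConnOn (supp τ) τ ∧ ∀ e ∈ F \ τ, ∀ v ∈ e, v ∉ supp τ

/-- `C` is the edge set of a simple circuit (cycle) of `G`. -/
def IsCircuit (G : SimpleGraph V) (C : Finset (Sym2 V)) : Prop :=
  ∃ (v : V) (w : G.Walk v v), w.IsCycle ∧ w.edges.toFinset = C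

/-- `B` is a broken circuit of `G`: a simple circuit minus its maximal edge. -/
def IsBrokenCircuit [LinearOrder (Sym2 V)] (G : SimpleGraph V) (B : Finset (Sym2 V)) : Prop :=
  ∃ C e, IsCircuit G C ∧ e ∈ C ∧ (∀ f ∈ C, f ≤ e) ∧ B = C.erase e

/-- `m` is a partition scheme in `G`. -/
def IsPartitionScheme [Fintype V] [DecidableEq V] (G : SimpleGraph V) [DecidableRel G.Adj]
    (m : Finset (Sym2 V) → Finset (Sym2 V)) : Prop :=
  ∀ R : Finset V, 2 ≤ R.card → ConnOn R (edgesIn G R) →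
    (∀ τ, IsSpanningTree G R τ → τ ⊆ m τ ∧ IsCSS G R (m τ)) ∧
    (∀ g, IsCSS G R g → ∃! τ, IsSpanningTree G R τ ∧ τ ⊆ g ∧ g ⊆ m τ)

/-- The minimal-tree partition scheme: `μ(τ)` adds to `τ` every edge `{x,y}` of `G|_R`
larger than all the edges on the path in `τ` from `x` to `y`. -/
noncomputable def mu [Fintype V] [DecidableEq V] (G : SimpleGraph V) [DecidableRel G.Adj]
    [LinearOrder (Sym2 V)] (R : Finset V) (τ : Finset (Sym2 V)) : Finset (Sym2 V) :=
  τ ∪ (edgesIn G R).filter (fun e => e ∉ τ ∧ ∀ x y : V, e = s(x, y) →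
    ∀ p : (SimpleGraph.fromEdgeSet (τ : Set (Sym2 V))).Walk x y, p.IsPath → ∀ f ∈ p.edges, f < e)

/-- All unordered pairs of distinct elements of `R`. -/
noncomputable def allPairs [DecidableEq V] (R : Finset V) : Finset (Sym2 V) :=
  ((R ×ˢ R).filter (fun p => p.1 ≠ p.2)).image (fun p => s(p.1, p.2))

/-- `f` takes the same value at the two endpoints of `e`. -/
def eqOn (f : V → ℕ) (e : Sym2 V) : Prop :=
  Sym2.lift ⟨fun x y => f x = f y, fun x y => propext ⟨Eq.symm, Eq.symm⟩⟩ e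


private lemma connOn_mono {V : Type*} {R : Finset V} {F F' : Finset (Sym2 V)}
    (h : F ⊆ F') (hc : ConnOn R F) : ConnOn R F' := by
  refine hc.mono ?_
  intro a b hab
  exact SimpleGraph.fromEdgeSet_mono (by exact_mod_cast h) hab

private lemma key_sum {V : Type*} [Fintype V] [DecidableEq V] (G : SimpleGraph V)
    [DecidableRel G.Adj] (R : Finset V) (m : Finset (Sym2 V) → Finset (Sym2 V))
    (hm1 : ∀ τ, IsSpanningTree G R τ → τ ⊆ m τ ∧ IsCSS G R (m τ))
    (hm2 : ∀ g, IsCSS G R g → ∃! τ, IsSpanningTree G R τ ∧ τ ⊆ g ∧ g ⊆ m τ) :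
    ∑ g ∈ (edgesIn G R).powerset.filter (IsCSS G R), (-1 : ℤ) ^ g.card =
      (-1 : ℤ) ^ (R.card - 1) *
        (((edgesIn G R).powerset.filter (fun τ => IsSpanningTree G R τ ∧ m τ = τ)).card : ℤ) := by
  classical
  set T := (edgesIn G R).powerset.filter (IsSpanningTree G R) with hT
  have hTmem : ∀ τ ∈ T, IsSpanningTree G R τ := by
    intro τ hτ; exact (Finset.mem_filter.mp hτ).2
  -- each interval consists of CSS's
  have hIccCSS : ∀ τ ∈ T, ∀ g ∈ Finset.Icc τ (m τ), IsCSS G R g := by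
    intro τ hτ g hg
    have ht := hTmem τ hτ
    rw [Finset.mem_Icc] at hg
    refine ⟨hg.2.trans (hm1 τ ht).2.1, connOn_mono hg.1 ht.1.2⟩
  -- decomposition of CSS's as disjoint union of intervals
  have hS : (edgesIn G R).powerset.filter (IsCSS G R) =
      T.biUnion (fun τ => Finset.Icc τ (m τ)) := by
    ext g
    simp only [Finset.mem_filter, Finset.mem_powerset, Finset.mem_biUnion, Finset.mem_Icc]
    constructor
    · rintro ⟨hsub, hcss⟩
      obtain ⟨τ, ⟨ht, h1, h2⟩, -⟩ := hm2 g hcss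
      exact ⟨τ, Finset.mem_filter.mpr ⟨Finset.mem_powerset.mpr ht.1.1, ht⟩, h1, h2⟩
    · rintro ⟨τ, hτ, h1, h2⟩
      have hcss := hIccCSS τ hτ g (Finset.mem_Icc.mpr ⟨h1, h2⟩)
      exact ⟨hcss.1, hcss⟩
  have hdisj : ∀ τ₁ ∈ T, ∀ τ₂ ∈ T, τ₁ ≠ τ₂ →
      Disjoint (Finset.Icc τ₁ (m τ₁)) (Finset.Icc τ₂ (m τ₂)) := by
    intro τ₁ h₁ τ₂ h₂ hne
    rw [Finset.disjoint_left]
    intro g hg1 hg2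
    have hcss := hIccCSS τ₁ h₁ g hg1
    obtain ⟨τ, -, huniq⟩ := hm2 g hcss
    rw [Finset.mem_Icc] at hg1 hg2
    exact hne ((huniq τ₁ ⟨hTmem τ₁ h₁, hg1.1, hg1.2⟩).trans
      (huniq τ₂ ⟨hTmem τ₂ h₂, hg2.1, hg2.2⟩).symm)
  rw [hS, Finset.sum_biUnion]
  · have inner : ∀ τ ∈ T, ∑ g ∈ Finset.Icc τ (m τ), (-1 : ℤ) ^ g.card =
        if m τ = τ then (-1 : ℤ) ^ (R.card - 1) else 0 := by
      intro τ hτ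
      have ht := hTmem τ hτ
      have hτm : τ ⊆ m τ := (hm1 τ ht).1
      have : ∑ g ∈ Finset.Icc τ (m τ), (-1 : ℤ) ^ g.card =
          ∑ s ∈ (m τ \ τ).powerset, (-1 : ℤ) ^ (s ∪ τ).card := by
        refine Finset.sum_nbij' (fun g => g \ τ) (fun s => s ∪ τ) ?_ ?_ ?_ ?_ ?_
        · intro g hg
          rw [Finset.mem_Icc] at hg
          exact Finset.mem_powerset.mpr (Finset.sdiff_subset_sdiff hg.2 (le_refl τ))
        · intro s hs
          rw [Finset.mem_powerset] at hs
          exact Finset.mem_Icc.mpr ⟨Finset.subset_union_right,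
            Finset.union_subset ((hs.trans Finset.sdiff_subset)) hτm⟩
        · intro g hg
          rw [Finset.mem_Icc] at hg
          exact Finset.sdiff_union_of_subset hg.1
        · intro s hs
          rw [Finset.mem_powerset] at hs
          exact Finset.union_sdiff_cancel_right
            (Finset.disjoint_of_subset_left hs Finset.sdiff_disjoint)
        · intro g hg
          rw [Finset.mem_Icc] at hg
          rw [Finset.sdiff_union_of_subset hg.1]
      rw [this]
      have hcard : ∀ s ∈ (m τ \ τ).powerset, (s ∪ τ).card = s.card + τ.card := by
        intro s hs
        rw [Finset.mem_powerset] at hs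
        exact Finset.card_union_of_disjoint
          (Finset.disjoint_of_subset_left hs Finset.sdiff_disjoint)
      calc ∑ s ∈ (m τ \ τ).powerset, (-1 : ℤ) ^ (s ∪ τ).card
          = ∑ s ∈ (m τ \ τ).powerset, (-1 : ℤ) ^ τ.card * (-1 : ℤ) ^ s.card := by
            refine Finset.sum_congr rfl fun s hs => ?_
            rw [hcard s hs, pow_add, mul_comm]
        _ = (-1 : ℤ) ^ τ.card * ∑ s ∈ (m τ \ τ).powerset, (-1 : ℤ) ^ s.card := by
            rw [Finset.mul_sum]
        _ = if m τ = τ then (-1 : ℤ) ^ (R.card - 1) else 0 := by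
            rw [Finset.sum_powerset_neg_one_pow_card, ht.2]
            have : m τ \ τ = ∅ ↔ m τ = τ := by
              rw [Finset.sdiff_eq_empty_iff_subset]
              exact ⟨fun h => subset_antisymm h hτm, fun h => h.le⟩
            by_cases hmt : m τ = τ <;> simp [hmt, this]
    rw [Finset.sum_congr rfl inner, ← Finset.sum_filter, Finset.sum_const,
      Finset.filter_filter, nsmul_eq_mul, mul_comm]
  · exact hdisj

/-- The number of `m`-fixed spanning trees does not depend on the partition scheme `m`. -/
theorem fixed_tree_count_independent [Fintype V] [DecidableEq V] (G : SimpleGraph V)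
    [DecidableRel G.Adj] (R : Finset V) (hR2 : 2 ≤ R.card) (hRconn : ConnOn R (edgesIn G R))
    (m m' : Finset (Sym2 V) → Finset (Sym2 V))
    (hm1 : ∀ τ, IsSpanningTree G R τ → τ ⊆ m τ ∧ IsCSS G R (m τ))
    (hm2 : ∀ g, IsCSS G R g → ∃! τ, IsSpanningTree G R τ ∧ τ ⊆ g ∧ g ⊆ m τ)
    (hm1' : ∀ τ, IsSpanningTree G R τ → τ ⊆ m' τ ∧ IsCSS G R (m' τ))
    (hm2' : ∀ g, IsCSS G R g → ∃! τ, IsSpanningTree G R τ ∧ τ ⊆ g ∧ g ⊆ m' τ) :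
    ((edgesIn G R).powerset.filter (fun τ => IsSpanningTree G R τ ∧ m τ = τ)).card =
      ((edgesIn G R).powerset.filter (fun τ => IsSpanningTree G R τ ∧ m' τ = τ)).card ∧
    (((edgesIn G R).powerset.filter (fun τ => IsSpanningTree G R τ ∧ m τ = τ)).card : ℤ) =
      (-1 : ℤ) ^ (R.card - 1) *
        ∑ g ∈ (edgesIn G R).powerset.filter (IsCSS G R), (-1 : ℤ) ^ g.card := by
  have h1 := key_sum G R m hm1 hm2
  have h2 := key_sum G R m' hm1' hm2'
  have hsq : (-1 : ℤ) ^ (R.card - 1) * (-1 : ℤ) ^ (R.card - 1) = 1 := by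
    rw [← pow_add, ← two_mul, pow_mul]; norm_num
  have e1 : (((edgesIn G R).powerset.filter (fun τ => IsSpanningTree G R τ ∧ m τ = τ)).card : ℤ) =
      (-1 : ℤ) ^ (R.card - 1) *
        ∑ g ∈ (edgesIn G R).powerset.filter (IsCSS G R), (-1 : ℤ) ^ g.card := by
    rw [h1, ← mul_assoc, hsq, one_mul]
  have e2 : (((edgesIn G R).powerset.filter (fun τ => IsSpanningTree G R τ ∧ m' τ = τ)).card : ℤ) =
      (-1 : ℤ) ^ (R.card - 1) *
        ∑ g ∈ (edgesIn G R).powerset.filter (IsCSS G R), (-1 : ℤ) ^ g.card := by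
    rw [h2, ← mul_assoc, hsq, one_mul]
  refine ⟨?_, e1⟩
  exact_mod_cast e1.trans e2.symm

end BC
end

section
/- For any finite vertex set V and weights w : pairs of V → ℝ, the product over all pairs {x,y} ⊆ V of (w_{xy} + 1) equals the sum over all graphs g on vertex set V (not necessarily subgraphs of G) of the product over edges {x,y} of g of w_{xy}; moreover, grouping by the union of nontrivial components, this equals 1 + Σ_{k≥1} Σ over families {R_1,...,R_k} of pairwise disjoint subsets of V of size ≥ 2, of Π_{i=1}^k Σ_{g connected graph on R_i} Π_{{x,y} ∈ E_g} w_{xy}. -/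
open scoped Classical

namespace BC

variable {V : Type*}

set_option linter.unusedSectionVars false

section Aux
variable [Fintype V] [DecidableEq V]

lemma mem_allPairs {R : Finset V} {e : Sym2 V} :
    e ∈ allPairs R ↔ ¬ e.IsDiag ∧ ∀ v ∈ e, v ∈ R := by
  constructor
  · rintro h
    simp only [allPairs, Finset.mem_image, Finset.mem_filter, Finset.mem_product] at h
    obtain ⟨⟨x, y⟩, ⟨⟨hx, hy⟩, hne⟩, rfl⟩ := h
    refine ⟨by simpa using hne, ?_⟩
    intro v hv; rcases Sym2.mem_iff.mp hv with rfl | rfl <;> assumption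
  · rintro ⟨hd, hm⟩
    induction e using Sym2.ind with
    | _ x y =>
      simp only [allPairs, Finset.mem_image, Finset.mem_filter, Finset.mem_product]
      exact ⟨(x, y), ⟨⟨hm x (by simp), hm y (by simp)⟩, by simpa using hd⟩, rfl⟩

lemma allPairs_disjoint {R R' : Finset V} (h : Disjoint R R') :
    Disjoint (allPairs R) (allPairs R') := by
  rw [Finset.disjoint_left]
  intro e he he'
  induction e using Sym2.ind with
  | _ x y =>
    have h1 := (mem_allPairs.mp he).2 x (by simp)
    have h2 := (mem_allPairs.mp he').2 x (by simp)
    exact (Finset.disjoint_left.mp h h1) h2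

/-- The graph with edge set `g`. -/
noncomputable def Gr (g : Finset (Sym2 V)) : SimpleGraph V :=
  SimpleGraph.fromEdgeSet (g : Set (Sym2 V))

lemma gr_adj {g : Finset (Sym2 V)} {x y : V} : (Gr g).Adj x y ↔ s(x, y) ∈ g ∧ x ≠ y := by
  simp [Gr]

/-- Edges of `g` with both endpoints in `R`. -/
noncomputable def restrictE (g : Finset (Sym2 V)) (R : Finset V) : Finset (Sym2 V) :=
  g.filter (fun e => ∀ v ∈ e, v ∈ R)

lemma mem_restrictE {g : Finset (Sym2 V)} {R : Finset V} {e : Sym2 V} :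
    e ∈ restrictE g R ↔ e ∈ g ∧ ∀ v ∈ e, v ∈ R := by simp [restrictE]

lemma restrictE_subset {g : Finset (Sym2 V)} {R : Finset V} : restrictE g R ⊆ g :=
  Finset.filter_subset _ _

lemma restrictE_subset_allPairs {g : Finset (Sym2 V)} (hg : g ⊆ allPairs Finset.univ)
    {R : Finset V} : restrictE g R ⊆ allPairs R := by
  intro e he
  rw [mem_restrictE] at he
  exact mem_allPairs.mpr ⟨(mem_allPairs.mp (hg he.1)).1, he.2⟩

/-- The connected component of `v` in the graph with edge set `g`. -/
noncomputable def comp (g : Finset (Sym2 V)) (v : V) : Finset V :=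
  Finset.univ.filter (fun u => (Gr g).Reachable u v)

lemma mem_comp {g : Finset (Sym2 V)} {u v : V} :
    u ∈ comp g v ↔ (Gr g).Reachable u v := by simp [comp]

lemma self_mem_comp {g : Finset (Sym2 V)} (v : V) : v ∈ comp g v :=
  mem_comp.mpr (SimpleGraph.Reachable.refl v)

lemma comp_eq_of_reachable {g : Finset (Sym2 V)} {u v : V} (h : (Gr g).Reachable u v) :
    comp g u = comp g v := by
  ext z; simp only [mem_comp]
  exact ⟨fun hz => hz.trans h, fun hz => hz.trans h.symm⟩

/-- The supports of the nontrivial connected components of the graph with edge set `g`. -/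
noncomputable def comps (g : Finset (Sym2 V)) : Finset (Finset V) :=
  (supp g).image (comp g)

lemma mem_supp {g : Finset (Sym2 V)} {v : V} : v ∈ supp g ↔ ∃ e ∈ g, v ∈ e := by simp [supp]

/-- The second endpoint of an edge stays in a component containing the first. -/
lemma other_mem_comp {g : Finset (Sym2 V)} {v x y : V} (he : s(x, y) ∈ g)
    (hx : x ∈ comp g v) : y ∈ comp g v := by
  by_cases hxy : x = y
  · subst hxy; exact hx
  · exact mem_comp.mpr ((SimpleGraph.Adj.reachable
      (gr_adj.mpr ⟨by rwa [Sym2.eq_swap], Ne.symm hxy⟩)).trans (mem_comp.mp hx))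

lemma edge_mem_restrict_comp {g : Finset (Sym2 V)} {v : V} {e : Sym2 V} (he : e ∈ g)
    (hx : ∃ x ∈ e, x ∈ comp g v) : e ∈ restrictE g (comp g v) := by
  induction e using Sym2.ind with
  | _ x y =>
    rw [mem_restrictE]
    obtain ⟨z, hz, hzc⟩ := hx
    rcases Sym2.mem_iff.mp hz with rfl | rfl
    · refine ⟨he, ?_⟩
      intro u hu; rcases Sym2.mem_iff.mp hu with rfl | rfl
      · exact hzc
      · exact other_mem_comp he hzc
    · refine ⟨he, ?_⟩
      intro u hu; rcases Sym2.mem_iff.mp hu with rfl | rfl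
      · exact other_mem_comp (by rwa [Sym2.eq_swap]) hzc
      · exact hzc

lemma two_le_card_comp {g : Finset (Sym2 V)} (hg : g ⊆ allPairs Finset.univ) {v : V}
    (hv : v ∈ supp g) : 2 ≤ (comp g v).card := by
  obtain ⟨e, he, hve⟩ := mem_supp.mp hv
  induction e using Sym2.ind with
  | _ x y =>
    have hnd : x ≠ y := by
      have := (mem_allPairs.mp (hg he)).1; simpa using this
    have hx : x ∈ comp g v := by
      rcases Sym2.mem_iff.mp hve with rfl | rfl
      · exact self_mem_comp v
      · exact other_mem_comp (by rwa [Sym2.eq_swap]) (self_mem_comp v)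
    have hy : y ∈ comp g v := other_mem_comp he hx
    exact Finset.one_lt_card.mpr ⟨x, hx, y, hy, hnd⟩

lemma comps_conditions {g : Finset (Sym2 V)} (hg : g ⊆ allPairs Finset.univ) :
    (∀ R ∈ comps g, 2 ≤ R.card) ∧ ((comps g : Set (Finset V)).Pairwise Disjoint) := by
  constructor
  · intro R hR
    obtain ⟨v, hv, rfl⟩ := Finset.mem_image.mp hR
    exact two_le_card_comp hg hv
  · intro R hR R' hR' hne
    obtain ⟨v, hv, rfl⟩ := Finset.mem_image.mp hR
    obtain ⟨v', hv', rfl⟩ := Finset.mem_image.mp hR'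
    rw [Finset.disjoint_left]
    intro z hz hz'
    exact hne (by
      rw [← comp_eq_of_reachable (mem_comp.mp hz), ← comp_eq_of_reachable (mem_comp.mp hz')])

/-- Walk transfer into a component restriction. -/
lemma reach_restrict {g : Finset (Sym2 V)} {v₀ : V} :
    ∀ {u v : V}, (Gr g).Walk u v → u ∈ comp g v₀ →
      (Gr (restrictE g (comp g v₀))).Reachable u v
  | _, _, SimpleGraph.Walk.nil, _ => SimpleGraph.Reachable.refl _
  | u, v, @SimpleGraph.Walk.cons _ _ _ b _ h p, hu => by
    have he : s(u, b) ∈ g := (gr_adj.mp h).1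
    have hb : b ∈ comp g v₀ := other_mem_comp he hu
    have hadj : (Gr (restrictE g (comp g v₀))).Adj u b := by
      rw [gr_adj]
      exact ⟨edge_mem_restrict_comp he ⟨u, by simp, hu⟩, (gr_adj.mp h).2⟩
    exact hadj.reachable.trans (reach_restrict p hb)

/-- Lifting reachability to an induced subgraph containing every edge endpoint. -/
lemma reachable_induce {H : SimpleGraph V} {S : Set V} (hS : ∀ ⦃x y : V⦄, H.Adj x y → x ∈ S) :
    ∀ {u v : V} (_ : H.Walk u v) (hu : u ∈ S) (hv : v ∈ S),
      (SimpleGraph.induce S H).Reachable ⟨u, hu⟩ ⟨v, hv⟩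
  | _, _, SimpleGraph.Walk.nil, _, _ => SimpleGraph.Reachable.refl _
  | u, v, @SimpleGraph.Walk.cons _ _ _ b _ h p, hu, hv => by
    have hb : b ∈ S := hS h.symm
    have hadj : (SimpleGraph.induce S H).Adj ⟨u, hu⟩ ⟨b, hb⟩ := h
    exact hadj.reachable.trans (reachable_induce hS p hb hv)

lemma connOn_comp {g : Finset (Sym2 V)} {v₀ : V} (hv₀ : v₀ ∈ supp g) :
    ConnOn (comp g v₀) (restrictE g (comp g v₀)) := by
  set R := comp g v₀ with hR
  have hS : ∀ ⦃x y : V⦄, (Gr (restrictE g R)).Adj x y → x ∈ (R : Finset V) := by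
    intro x y h
    exact (mem_restrictE.mp (gr_adj.mp h).1).2 x (by simp)
  have hprec : (SimpleGraph.induce ((R : Finset V) : Set V)
      (SimpleGraph.fromEdgeSet ((restrictE g R : Finset (Sym2 V)) : Set (Sym2 V)))).Preconnected := by
    rintro ⟨u, hu⟩ ⟨v, hv⟩
    have hu' : u ∈ R := by exact_mod_cast hu
    have hv' : v ∈ R := by exact_mod_cast hv
    have h1 : (Gr (restrictE g R)).Reachable u v₀ := by
      obtain ⟨p⟩ := mem_comp.mp hu'
      exact reach_restrict p hu'
    have h2 : (Gr (restrictE g R)).Reachable v v₀ := by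
      obtain ⟨p⟩ := mem_comp.mp hv'
      exact reach_restrict p hv'
    obtain ⟨p⟩ := h1.trans h2.symm
    exact reachable_induce hS p hu hv
  have : Nonempty ((R : Finset V) : Set V) := ⟨⟨v₀, by exact_mod_cast self_mem_comp v₀⟩⟩
  exact SimpleGraph.Connected.mk hprec

/-- Claim C: a graph is the union of the restrictions to its components. -/
lemma biUnion_restrict {g : Finset (Sym2 V)} :
    (comps g).biUnion (restrictE g) = g := by
  ext e
  simp only [Finset.mem_biUnion]
  constructor
  · rintro ⟨R, _, he⟩; exact restrictE_subset he
  · intro he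
    induction e using Sym2.ind with
    | _ x y =>
      refine ⟨comp g x, Finset.mem_image.mpr ⟨x, mem_supp.mpr ⟨s(x, y), he, by simp⟩, rfl⟩, ?_⟩
      exact edge_mem_restrict_comp he ⟨x, by simp, self_mem_comp x⟩

end Aux
section Union
variable [Fintype V] [DecidableEq V]

lemma stay_in_R {P : Finset (Finset V)} {q : Finset V → Finset (Sym2 V)}
    (hd : (P : Set (Finset V)).Pairwise Disjoint)
    (hsub : ∀ R ∈ P, q R ⊆ allPairs R) {R : Finset V} (hR : R ∈ P) :
    ∀ {u v : V}, (Gr (P.biUnion q)).Walk u v → u ∈ R → v ∈ R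
  | _, _, SimpleGraph.Walk.nil, hu => hu
  | u, v, @SimpleGraph.Walk.cons _ _ _ b _ h p, hu => by
    have he : s(u, b) ∈ P.biUnion q := (gr_adj.mp h).1
    obtain ⟨R', hR', heR'⟩ := Finset.mem_biUnion.mp he
    have huR' : u ∈ R' := (mem_allPairs.mp (hsub R' hR' heR')).2 u (by simp)
    have hbR' : b ∈ R' := (mem_allPairs.mp (hsub R' hR' heR')).2 b (by simp)
    have hRR' : R = R' := by
      by_contra hne
      exact (Finset.disjoint_left.mp (hd hR hR' hne)) hu huR'
    subst hRR'
    exact stay_in_R hd hsub hR p hbR'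

lemma reach_in_union {P : Finset (Finset V)} {q : Finset V → Finset (Sym2 V)}
    {R : Finset V} (hR : R ∈ P) (hconn : ConnOn R (q R)) {x y : V}
    (hx : x ∈ R) (hy : y ∈ R) : (Gr (P.biUnion q)).Reachable x y := by
  have h1 : (SimpleGraph.induce ((R : Finset V) : Set V)
      (SimpleGraph.fromEdgeSet ((q R : Finset (Sym2 V)) : Set (Sym2 V)))).Reachable
      ⟨x, by exact_mod_cast hx⟩ ⟨y, by exact_mod_cast hy⟩ := hconn.preconnected _ _
  have h2 : (Gr (q R)).Reachable x y := by
    have := h1.map (SimpleGraph.Embedding.induce _).toHom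
    simpa [Gr] using this
  refine h2.mono (SimpleGraph.fromEdgeSet_mono ?_)
  exact_mod_cast Finset.subset_biUnion_of_mem q hR

lemma comp_union_eq {P : Finset (Finset V)} {q : Finset V → Finset (Sym2 V)}
    (hd : (P : Set (Finset V)).Pairwise Disjoint)
    (hsub : ∀ R ∈ P, q R ⊆ allPairs R)
    (hconn : ∀ R ∈ P, ConnOn R (q R)) {R : Finset V} (hR : R ∈ P) {x : V} (hx : x ∈ R) :
    comp (P.biUnion q) x = R := by
  ext z
  rw [mem_comp]
  constructor
  · intro h
    obtain ⟨p⟩ := h.symm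
    exact stay_in_R hd hsub hR p hx
  · intro hz
    exact reach_in_union hR (hconn R hR) hz hx

/-- A connected graph on `R` with at least two vertices has an edge at any given vertex. -/
lemma exists_edge_of_conn {R : Finset V} (h2 : 2 ≤ R.card) {F : Finset (Sym2 V)}
    (hconn : ConnOn R F) {x : V} (hx : x ∈ R) : ∃ e ∈ F, x ∈ e := by
  obtain ⟨a, ha, b, hb, hab⟩ := Finset.one_lt_card.mp h2
  have hy : ∃ y ∈ R, y ≠ x := by
    rcases eq_or_ne a x with rfl | h
    · exact ⟨b, hb, by simpa [eq_comm] using hab⟩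
    · exact ⟨a, ha, h⟩
  obtain ⟨y, hyR, hyx⟩ := hy
  have h1 : (SimpleGraph.induce ((R : Finset V) : Set V)
      (SimpleGraph.fromEdgeSet ((F : Finset (Sym2 V)) : Set (Sym2 V)))).Reachable
      ⟨x, by exact_mod_cast hx⟩ ⟨y, by exact_mod_cast hyR⟩ := hconn.preconnected _ _
  obtain ⟨p⟩ := h1
  cases p with
  | nil => exact absurd rfl hyx
  | @cons _ c _ h p =>
    have : (SimpleGraph.fromEdgeSet ((F : Finset (Sym2 V)) : Set (Sym2 V))).Adj x (c : V) := h
    have he : s(x, (c : V)) ∈ F := by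
      have := (SimpleGraph.fromEdgeSet_adj _).mp this
      exact_mod_cast this.1
    exact ⟨s(x, (c : V)), he, by simp⟩

lemma comps_union {P : Finset (Finset V)} {q : Finset V → Finset (Sym2 V)}
    (hd : (P : Set (Finset V)).Pairwise Disjoint) (h2 : ∀ R ∈ P, 2 ≤ R.card)
    (hsub : ∀ R ∈ P, q R ⊆ allPairs R) (hconn : ∀ R ∈ P, ConnOn R (q R)) :
    comps (P.biUnion q) = P := by
  ext S
  constructor
  · intro hS
    obtain ⟨v, hv, rfl⟩ := Finset.mem_image.mp hS
    obtain ⟨e, he, hve⟩ := mem_supp.mp hv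
    obtain ⟨R, hR, heR⟩ := Finset.mem_biUnion.mp he
    have hvR : v ∈ R := (mem_allPairs.mp (hsub R hR heR)).2 v hve
    rw [comp_union_eq hd hsub hconn hR hvR]
    exact hR
  · intro hS
    obtain ⟨a, ha, b, hb, hab⟩ := Finset.one_lt_card.mp (h2 S hS)
    obtain ⟨e, heF, hae⟩ := exists_edge_of_conn (h2 S hS) (hconn S hS) ha
    have heg : e ∈ P.biUnion q := Finset.mem_biUnion.mpr ⟨S, hS, heF⟩
    refine Finset.mem_image.mpr ⟨a, mem_supp.mpr ⟨e, heg, hae⟩, ?_⟩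
    exact comp_union_eq hd hsub hconn hS ha

lemma restrict_union_eq {P : Finset (Finset V)} {q : Finset V → Finset (Sym2 V)}
    (hd : (P : Set (Finset V)).Pairwise Disjoint)
    (hsub : ∀ R ∈ P, q R ⊆ allPairs R) {R : Finset V} (hR : R ∈ P) :
    restrictE (P.biUnion q) R = q R := by
  ext e
  rw [mem_restrictE]
  constructor
  · rintro ⟨he, hin⟩
    obtain ⟨R', hR', heR'⟩ := Finset.mem_biUnion.mp he
    have hRR' : R = R' := by
      by_contra hne
      induction e using Sym2.ind with
      | _ x y =>
        have hx' : x ∈ R' := (mem_allPairs.mp (hsub R' hR' heR')).2 x (by simp)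
        exact (Finset.disjoint_left.mp (hd hR hR' hne)) (hin x (by simp)) hx'
    subst hRR'
    exact heR'
  · intro he
    exact ⟨Finset.mem_biUnion.mpr ⟨R, hR, he⟩,
      fun v hv => (mem_allPairs.mp (hsub R hR he)).2 v hv⟩

end Union

lemma mayer_part2 [Fintype V] [DecidableEq V] (w : Sym2 V → ℝ) :
    (∑ g ∈ (allPairs (Finset.univ : Finset V)).powerset, ∏ e ∈ g, w e) =
      ∑ Q ∈ (Finset.univ : Finset (Finset (Finset V))).filter
          (fun Q : Finset (Finset V) => (∀ R ∈ Q, 2 ≤ R.card) ∧ (Q : Set (Finset V)).Pairwise Disjoint),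
        ∏ R ∈ Q, ∑ g ∈ (allPairs R).powerset.filter (ConnOn R), ∏ e ∈ g, w e := by
  set A := allPairs (Finset.univ : Finset V) with hA
  have hmaps : ∀ g ∈ A.powerset, comps g ∈ (Finset.univ : Finset (Finset (Finset V))).filter
      (fun P : Finset (Finset V) => (∀ R ∈ P, 2 ≤ R.card) ∧ (P : Set (Finset V)).Pairwise Disjoint) := by
    intro g hg
    rw [Finset.mem_powerset] at hg
    rw [Finset.mem_filter]
    exact ⟨Finset.mem_univ _, comps_conditions hg⟩
  have hre := Finset.sum_fiberwise_of_maps_to hmaps (fun g : Finset (Sym2 V) => ∏ e ∈ g, w e)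
  rw [← hre]
  apply Finset.sum_congr rfl
  intro P hP
  rw [Finset.mem_filter] at hP
  obtain ⟨-, hP2, hPd⟩ := hP
  rw [Finset.prod_sum]
  refine Finset.sum_nbij' (i := fun g => fun R (_ : R ∈ P) => restrictE g R)
    (j := fun p => P.biUnion (fun R => if h : R ∈ P then p R h else ∅)) ?_ ?_ ?_ ?_ ?_
  · -- i maps fibers into pi
    intro g hg
    rw [Finset.mem_filter, Finset.mem_powerset] at hg
    obtain ⟨hgA, hgP⟩ := hg
    rw [Finset.mem_pi]
    intro R hR
    rw [Finset.mem_filter, Finset.mem_powerset]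
    refine ⟨restrictE_subset_allPairs hgA, ?_⟩
    rw [← hgP] at hR
    obtain ⟨v, hv, rfl⟩ := Finset.mem_image.mp hR
    exact connOn_comp hv
  · -- j maps pi into fibers
    intro p hp
    rw [Finset.mem_pi] at hp
    have hsub : ∀ R ∈ P, (if h : R ∈ P then p R h else ∅) ⊆ allPairs R := by
      intro R hR
      rw [dif_pos hR]
      have := hp R hR
      rw [Finset.mem_filter, Finset.mem_powerset] at this
      exact this.1
    have hconn : ∀ R ∈ P, ConnOn R (if h : R ∈ P then p R h else ∅) := by
      intro R hR
      rw [dif_pos hR]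
      have := hp R hR
      rw [Finset.mem_filter, Finset.mem_powerset] at this
      exact this.2
    rw [Finset.mem_filter, Finset.mem_powerset]
    constructor
    · intro e he
      obtain ⟨R, hR, heR⟩ := Finset.mem_biUnion.mp he
      have := hsub R hR heR
      rw [hA]
      rw [mem_allPairs] at this ⊢
      exact ⟨this.1, fun v _ => Finset.mem_univ v⟩
    · exact comps_union hPd hP2 hsub hconn
  · -- left inverse
    intro g hg
    rw [Finset.mem_filter, Finset.mem_powerset] at hg
    obtain ⟨hgA, hgP⟩ := hg
    have : P.biUnion (fun R => if h : R ∈ P then restrictE g R else ∅)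
        = P.biUnion (restrictE g) := by
      refine Finset.biUnion_congr rfl ?_
      intro R hR
      rw [dif_pos hR]
    beta_reduce
    rw [this, ← hgP, biUnion_restrict]
  · -- right inverse
    intro p hp
    rw [Finset.mem_pi] at hp
    have hsub : ∀ R ∈ P, (if h : R ∈ P then p R h else ∅) ⊆ allPairs R := by
      intro R hR
      rw [dif_pos hR]
      have := hp R hR
      rw [Finset.mem_filter, Finset.mem_powerset] at this
      exact this.1
    funext R hR
    beta_reduce
    rw [restrict_union_eq hPd hsub hR, dif_pos hR]
  · -- values agree
    intro g hg
    rw [Finset.mem_filter, Finset.mem_powerset] at hg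
    obtain ⟨hgA, hgP⟩ := hg
    have h0 : P.biUnion (restrictE g) = g := by rw [← hgP]; exact biUnion_restrict
    have hUnion : P.attach.biUnion (fun x => restrictE g x.1) = g := by
      ext e
      simp only [Finset.mem_biUnion, Finset.mem_attach, true_and, Subtype.exists]
      constructor
      · rintro ⟨a, ha, he⟩
        rw [← h0]
        exact Finset.mem_biUnion.mpr ⟨a, ha, he⟩
      · intro he
        rw [← h0] at he
        obtain ⟨a, ha, hea⟩ := Finset.mem_biUnion.mp he
        exact ⟨a, ha, hea⟩
    have hdisj : (↑P.attach : Set { x // x ∈ P }).PairwiseDisjoint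
        (fun x : { x // x ∈ P } => restrictE g x.1) := by
      intro x hx y hy hxy
      have hne : (x : Finset V) ≠ (y : Finset V) := fun h => hxy (Subtype.ext h)
      have hd : Disjoint (x : Finset V) (y : Finset V) :=
        hPd (by exact_mod_cast x.2) (by exact_mod_cast y.2) hne
      exact Finset.disjoint_of_subset_left (restrictE_subset_allPairs hgA)
        (Finset.disjoint_of_subset_right (restrictE_subset_allPairs hgA)
          (allPairs_disjoint hd))
    beta_reduce
    conv_lhs => rw [← hUnion]
    rw [Finset.prod_biUnion hdisj]
  

/-- The Mayer trick: expanding the product over all pairs, and regrouping graphs by the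
supports of their nontrivial connected components. -/
theorem mayer_trick [Fintype V] [DecidableEq V] (w : Sym2 V → ℝ) :
    (∏ e ∈ allPairs (Finset.univ : Finset V), (w e + 1) =
        ∑ g ∈ (allPairs (Finset.univ : Finset V)).powerset, ∏ e ∈ g, w e) ∧
    (∑ g ∈ (allPairs (Finset.univ : Finset V)).powerset, ∏ e ∈ g, w e =
        ∑ P ∈ (Finset.univ : Finset (Finset (Finset V))).filter
            (fun P => (∀ R ∈ P, 2 ≤ R.card) ∧ (P : Set (Finset V)).Pairwise Disjoint),
          ∏ R ∈ P, ∑ g ∈ (allPairs R).powerset.filter (ConnOn R), ∏ e ∈ g, w e) := by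
  constructor
  · simpa using Finset.prod_add w (fun _ => 1) (allPairs (Finset.univ : Finset V))
  · rw [mayer_part2 w]
    have himage : ((Finset.univ : Finset (Finset (Finset V))) >>=
          fun a => pure ((a : Finset (Finset V)) : Set (Finset V)))
        = Finset.univ.image (fun Q : Finset (Finset V) => (Q : Set (Finset V))) := by
      simp [Finset.image]; rfl
    rw [himage, Finset.sum_filter, Finset.sum_filter,
      Finset.sum_image (fun x _ y _ h => Finset.coe_injective h)]
    apply Finset.sum_congr rfl
    intro Q _
    simp [Finset.toFinset_coe]


end BC
end
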